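/- Let q ≥ 1 be fixed, λ_1 ≥ ... ≥ λ_q > 0, and λ_j = 0 for j > q. Let (p_n) be integers with p_n ≥ q + 2 and p_n ≤ C₀·n^α for some constant C₀ and some 0 ≤ α < 1. For each n let λ̂_1(n), ..., λ̂_{p_n}(n) ≥ 0 satisfy |λ̂_j(n) − λ_j| ≤ K·(p_n/n)^{1/2} for all n and all 1 ≤ j ≤ p_n, for some constant K. Let c₁(n), c₂(n) > 0 with c₁(n) → 0, c₂(n) → 0 and n·c₁(n)·c₂(n)/p_n → ∞, and fix τ ∈ (0, 1). Define ŝ_j(n) = λ̂_j(n)/(1 + λ̂_j(n)), ŝ*_j(n) = (ŝ_j(n)² + c₁(n))/(ŝ_{j+1}(n)² + c₁(n)) − 1, and r_j(n) = (ŝ*_{j+1}(n) + c₂(n))/(ŝ*_j(n) + c₂(n)). Then there exists N such that for all n ≥ N: r_q(n) ≤ τ and r_j(n) > τ for every j with q < j ≤ p_n − 2; consequently the set {j ∈ {1, ..., p_n − 2} : r_j(n) ≤ τ} is nonempty with maximum equal to q. -/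

import Mathlib

open Filter

/-- `ŝ_j = λ̂_j / (1 + λ̂_j)`. -/
noncomputable def sHat (lam : ℕ → ℝ) (j : ℕ) : ℝ := lam j / (1 + lam j)

/-- First-round ridge ratio `ŝ*_j = (ŝ_j² + c₁)/(ŝ_{j+1}² + c₁) − 1`. -/
noncomputable def sStar (lam : ℕ → ℝ) (c1 : ℝ) (j : ℕ) : ℝ :=
  ((sHat lam j) ^ 2 + c1) / ((sHat lam (j + 1)) ^ 2 + c1) - 1

/-- Second-round ridge ratio `r_j = (ŝ*_{j+1} + c₂)/(ŝ*_j + c₂)`. -/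
noncomputable def rRatio (lam : ℕ → ℝ) (c1 c2 : ℝ) (j : ℕ) : ℝ :=
  (sStar lam c1 (j + 1) + c2) / (sStar lam c1 j + c2)

open Topology

/-!
Write `e = K² p/n` for the squared estimation error. Beyond `q` every `ŝ_j²` is at most `e`, so
`|ŝ*_j| ≤ e/c₁`, which is negligible against `c₂` because `n c₁ c₂ / p → ∞`; hence `r_j` stays
near `1 > τ` for `j > q`. At `j = q` the numerator `ŝ*_{q+1} + c₂` tends to `0`, while `ŝ*_q ≥ (ŝ_q² − e)/(e + c₁)`
blows up since `ŝ_q² → (λ_q/(1+λ_q))² > 0`; hence `r_q → 0 < τ`.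
-/

lemma abs_div_one_add_sub_le {a b : ℝ} (ha : 0 ≤ a) (hb : 0 ≤ b) :
    |a / (1 + a) - b / (1 + b)| ≤ |a - b| := by
  have h1a : (0 : ℝ) < 1 + a := by linarith
  have h1b : (0 : ℝ) < 1 + b := by linarith
  rw [div_sub_div _ _ h1a.ne' h1b.ne', show a * (1 + b) - (1 + a) * b = a - b by ring, abs_div,
    abs_of_pos (mul_pos h1a h1b)]
  exact div_le_self (abs_nonneg _) (by nlinarith)

lemma abs_sub_div_add_le {x y E c : ℝ} (hx : 0 ≤ x) (hxE : x ≤ E) (hy : 0 ≤ y) (hyE : y ≤ E)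
    (hc : 0 < c) : |(x - y) / (y + c)| ≤ E / c := by
  have hyc : 0 < y + c := by linarith
  rw [abs_div, abs_of_pos hyc, div_le_div_iff₀ hyc hc]
  have hxy : |x - y| ≤ E := abs_sub_le_iff.mpr ⟨by linarith, by linarith⟩
  nlinarith [abs_nonneg (x - y)]

lemma lt_add_div_add {a b c δ τ : ℝ} (hτ : 0 ≤ τ) (hc : 0 < c) (ha : |a| ≤ δ) (hb : |b| ≤ δ)
    (h : δ * (1 + τ) < c * (1 - τ)) : τ < (b + c) / (a + c) := by
  obtain ⟨ha₁, ha₂⟩ := abs_le.mp ha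
  obtain ⟨hb₁, -⟩ := abs_le.mp hb
  have hac : 0 < a + c := by nlinarith
  rw [lt_div_iff₀ hac]
  nlinarith

lemma isGreatest_of_le_of_lt {r : ℕ → ℝ} {τ : ℝ} {q P : ℕ} (hq : 1 ≤ q) (hqP : q ≤ P)
    (hrq : r q ≤ τ) (hr : ∀ j, q < j → j ≤ P → τ < r j) :
    IsGreatest {j | 1 ≤ j ∧ j ≤ P ∧ r j ≤ τ} q :=
  ⟨⟨hq, hqP, hrq⟩, fun _ ⟨_, hjP, hrj⟩ => not_lt.mp fun hqj => (hr _ hqj hjP).not_ge hrj⟩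

lemma tendsto_div_natCast_of_le_rpow {p : ℕ → ℝ} {C α : ℝ} (hp : ∀ n, 0 ≤ p n) (hα : α < 1)
    (h : ∀ᶠ n in atTop, p n ≤ C * (n : ℝ) ^ α) :
    Tendsto (fun n : ℕ => p n / n) atTop (𝓝 0) := by
  have hpow : Tendsto (fun n : ℕ => C * (n : ℝ) ^ (α - 1)) atTop (𝓝 0) := by
    have := (tendsto_rpow_neg_atTop (by linarith : 0 < 1 - α)).comp tendsto_natCast_atTop_atTop
    simpa [neg_sub, Function.comp_def] using this.const_mul C
  refine squeeze_zero' (Eventually.of_forall fun n => div_nonneg (hp n) n.cast_nonneg) ?_ hpow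
  filter_upwards [h, eventually_ge_atTop 1] with n hn hn1
  have hn0 : (0 : ℝ) < n := by exact_mod_cast hn1
  calc p n / n ≤ C * (n : ℝ) ^ α / n := by gcongr
    _ = C * (n : ℝ) ^ (α - 1) := by rw [mul_div_assoc, Real.rpow_sub_one hn0.ne']

section Asymptotics

variable {ι : Type*} {l : Filter ι} {e c1 c2 : ι → ℝ}

lemma tendsto_sHat_of_abs_sub_le {lam : ℕ → ℝ} {lamhat : ι → ℕ → ℝ} {ε : ι → ℝ} {q : ℕ}
    (h0 : 0 ≤ lam q) (hnn : ∀ᶠ i in l, 0 ≤ lamhat i q)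
    (hrate : ∀ᶠ i in l, |lamhat i q - lam q| ≤ ε i) (hε : Tendsto ε l (𝓝 0)) :
    Tendsto (fun i => sHat (lamhat i) q) l (𝓝 (sHat lam q)) := by
  refine tendsto_iff_norm_sub_tendsto_zero.2
    (squeeze_zero' (Eventually.of_forall fun i => norm_nonneg _) ?_ hε)
  filter_upwards [hnn, hrate] with i hi hri
  exact (abs_div_one_add_sub_le hi h0).trans hri

lemma tendsto_mul_div_div_mul_of_tendsto_atTop {a b : ι → ℝ}
    (h : Tendsto (fun i => b i * c1 i * c2 i / a i) l atTop) (K : ℝ) :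
    Tendsto (fun i => K * (a i / b i) / (c1 i * c2 i)) l (𝓝 0) := by
  have := h.inv_tendsto_atTop.const_mul K
  rw [mul_zero] at this
  refine this.congr fun i => ?_
  simp only [Pi.inv_apply, inv_div]
  ring

lemma eventually_div_add_mul_add_le (he : Tendsto e l (𝓝 0)) (hc1 : Tendsto c1 l (𝓝 0))
    (hc2 : Tendsto c2 l (𝓝 0)) (hc2pos : ∀ i, 0 < c2 i)
    (hrel : Tendsto (fun i => e i / (c1 i * c2 i)) l (𝓝 0)) {G : ℝ} (hG : 0 < G) :
    ∀ᶠ i in l, (e i / c1 i + c2 i) * (e i + c1 i) ≤ G := by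
  have h : Tendsto (fun i => (e i / (c1 i * c2 i) * c2 i + c2 i) * (e i + c1 i)) l (𝓝 0) := by
    simpa using ((hrel.mul hc2).add hc2).mul (he.add hc1)
  refine (h.eventually_le_const hG).mono fun i hi => ?_
  rwa [div_mul_eq_mul_div, mul_div_mul_right _ _ (hc2pos i).ne'] at hi

lemma eventually_div_mul_one_add_lt (hc2pos : ∀ i, 0 < c2 i)
    (hrel : Tendsto (fun i => e i / (c1 i * c2 i)) l (𝓝 0)) {τ : ℝ} (hτ : τ < 1) :
    ∀ᶠ i in l, e i / c1 i * (1 + τ) < c2 i * (1 - τ) := by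
  refine ((hrel.mul_const (1 + τ)).eventually_lt_const (by linarith : 0 * (1 + τ) < 1 - τ)).mono
    fun i hi => ?_
  calc e i / c1 i * (1 + τ) = e i / (c1 i * c2 i) * (1 + τ) * c2 i := by
        field_simp [(hc2pos i).ne']
    _ < (1 - τ) * c2 i := mul_lt_mul_of_pos_right hi (hc2pos i)
    _ = c2 i * (1 - τ) := mul_comm _ _

end Asymptotics

section RidgeRatios

variable (lam : ℕ → ℝ) {c1 c2 τ e : ℝ} {j : ℕ}

lemma sHat_sq_le_of_le_mul_sqrt {K x : ℝ} (hx : 0 ≤ x) (h0 : 0 ≤ lam j) (h : lam j ≤ K * √x) :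
    sHat lam j ^ 2 ≤ K ^ 2 * x := by
  have hle : sHat lam j ^ 2 ≤ (K * √x) ^ 2 := pow_le_pow_left₀ (div_nonneg h0 (by linarith))
    ((div_le_self h0 (by linarith)).trans h) 2
  rwa [mul_pow, Real.sq_sqrt hx] at hle

lemma sStar_eq (hc1 : 0 < c1) (j : ℕ) :
    sStar lam c1 j = (sHat lam j ^ 2 - sHat lam (j + 1) ^ 2) / (sHat lam (j + 1) ^ 2 + c1) := by
  rw [sStar, div_sub_one (by positivity)]
  ring_nf

lemma abs_sStar_le (hc1 : 0 < c1) (hj : sHat lam j ^ 2 ≤ e) (hj1 : sHat lam (j + 1) ^ 2 ≤ e) :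
    |sStar lam c1 j| ≤ e / c1 := by
  rw [sStar_eq lam hc1]
  exact abs_sub_div_add_le (sq_nonneg _) hj (sq_nonneg _) hj1 hc1

lemma div_le_sStar {g : ℝ} (hc1 : 0 < c1) (hg : 0 ≤ g) (hsignal : g ≤ sHat lam j ^ 2 - e)
    (hj1 : sHat lam (j + 1) ^ 2 ≤ e) : g / (e + c1) ≤ sStar lam c1 j := by
  rw [sStar_eq lam hc1]
  exact div_le_div₀ (by linarith) (by linarith) (by positivity) (by linarith)

lemma rRatio_le {g : ℝ} (hc1 : 0 < c1) (hc2 : 0 ≤ c2) (hτ : 0 ≤ τ) (hg : 0 < g)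
    (hsignal : g ≤ sHat lam j ^ 2 - e) (hj1 : sHat lam (j + 1) ^ 2 ≤ e)
    (hj2 : sHat lam (j + 2) ^ 2 ≤ e) (hcut : (e / c1 + c2) * (e + c1) ≤ τ * g) :
    rRatio lam c1 c2 j ≤ τ := by
  have he : 0 ≤ e := (sq_nonneg _).trans hj1
  have hlow := div_le_sStar lam hc1 hg.le hsignal hj1
  have hup := (abs_le.mp (abs_sStar_le lam hc1 hj1 hj2)).2
  have hcut' : e / c1 + c2 ≤ τ * (g / (e + c1)) := by
    rw [← mul_div_assoc, le_div_iff₀ (by positivity)]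
    exact hcut
  have hpos : 0 < sStar lam c1 j + c2 := by
    have : 0 < g / (e + c1) := by positivity
    linarith
  rw [rRatio, div_le_iff₀ hpos]
  nlinarith

lemma lt_rRatio (hc1 : 0 < c1) (hc2 : 0 < c2) (hτ : 0 ≤ τ) (hj : sHat lam j ^ 2 ≤ e)
    (hj1 : sHat lam (j + 1) ^ 2 ≤ e) (hj2 : sHat lam (j + 2) ^ 2 ≤ e)
    (hsep : e / c1 * (1 + τ) < c2 * (1 - τ)) : τ < rRatio lam c1 c2 j :=
  lt_add_div_add hτ hc2 (abs_sStar_le lam hc1 hj hj1) (abs_sStar_le lam hc1 hj1 hj2) hsep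

lemma rRatio_le_and_lt {q P : ℕ} {g : ℝ} (hqP : q + 2 ≤ P) (hc1 : 0 < c1) (hc2 : 0 < c2)
    (hτ : 0 ≤ τ) (hg : 0 < g) (hnoise : ∀ j, q < j → j ≤ P → sHat lam j ^ 2 ≤ e)
    (hsignal : g ≤ sHat lam q ^ 2 - e) (hcut : (e / c1 + c2) * (e + c1) ≤ τ * g)
    (hsep : e / c1 * (1 + τ) < c2 * (1 - τ)) :
    rRatio lam c1 c2 q ≤ τ ∧ ∀ j, q < j → j ≤ P - 2 → τ < rRatio lam c1 c2 j :=
  ⟨rRatio_le lam hc1 hc2.le hτ hg hsignal (hnoise _ (by omega) (by omega))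
      (hnoise _ (by omega) (by omega)) hcut,
    fun _ hqj hjP => lt_rRatio lam hc1 hc2 hτ (hnoise _ hqj (by omega))
      (hnoise _ (by omega) (by omega)) (hnoise _ (by omega) (by omega)) hsep⟩

end RidgeRatios

theorem tdrr_identifies_q_divergent_p_general (q : ℕ) (hq : 1 ≤ q)
    (lam : ℕ → ℝ)
    (hpos : 0 < lam q)
    (hzero : ∀ j, q < j → lam j = 0)
    (p : ℕ → ℕ) (hp : ∀ n, q + 2 ≤ p n)
    (C₀ α : ℝ) (hα1 : α < 1)
    (hpgrowth : ∀ n, 1 ≤ n → (p n : ℝ) ≤ C₀ * (n : ℝ) ^ α)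
    (lamhat : ℕ → ℕ → ℝ)
    (hnn : ∀ n j, 1 ≤ j → j ≤ p n → 0 ≤ lamhat n j)
    (K : ℝ)
    (hrate : ∀ n, 1 ≤ n → ∀ j, 1 ≤ j → j ≤ p n →
      |lamhat n j - lam j| ≤ K * Real.sqrt ((p n : ℝ) / n))
    (c1 c2 : ℕ → ℝ) (hc1pos : ∀ n, 0 < c1 n) (hc2pos : ∀ n, 0 < c2 n)
    (hc1 : Tendsto c1 atTop (nhds 0)) (hc2 : Tendsto c2 atTop (nhds 0))
    (hncc : Tendsto (fun n : ℕ => (n : ℝ) * c1 n * c2 n / (p n : ℝ)) atTop atTop)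
    (τ : ℝ) (hτ0 : 0 < τ) (hτ1 : τ < 1) :
    ∃ N, ∀ n, N ≤ n →
      rRatio (lamhat n) (c1 n) (c2 n) q ≤ τ ∧
      (∀ j, q < j → j ≤ p n - 2 → τ < rRatio (lamhat n) (c1 n) (c2 n) j) ∧
      {j | 1 ≤ j ∧ j ≤ p n - 2 ∧ rRatio (lamhat n) (c1 n) (c2 n) j ≤ τ}.Nonempty ∧
      sSup {j | 1 ≤ j ∧ j ≤ p n - 2 ∧ rRatio (lamhat n) (c1 n) (c2 n) j ≤ τ} = q := by
  have hs : 0 < sHat lam q := div_pos hpos (by linarith)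
  have hqp : ∀ n, q ≤ p n := fun n => by have := hp n; omega
  have hpn : Tendsto (fun n : ℕ => (p n : ℝ) / n) atTop (𝓝 0) :=
    tendsto_div_natCast_of_le_rpow (fun n => (p n).cast_nonneg) hα1
      (eventually_atTop.2 ⟨1, hpgrowth⟩)
  set e : ℕ → ℝ := fun n => K ^ 2 * (p n / n)
  have he : Tendsto e atTop (𝓝 0) := by simpa using hpn.const_mul (K ^ 2)
  have hrel : Tendsto (fun n => e n / (c1 n * c2 n)) atTop (𝓝 0) :=
    tendsto_mul_div_div_mul_of_tendsto_atTop hncc (K ^ 2)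
  have hsq : Tendsto (fun n => sHat (lamhat n) q) atTop (𝓝 (sHat lam q)) :=
    tendsto_sHat_of_abs_sub_le hpos.le
      (Eventually.of_forall fun n => hnn n q hq (hqp n))
      (eventually_atTop.2 ⟨1, fun n hn => hrate n hn q hq (hqp n)⟩)
      (by simpa using hpn.sqrt.const_mul K)
  have hsignal : ∀ᶠ n in atTop, sHat lam q ^ 2 / 2 ≤ sHat (lamhat n) q ^ 2 - e n :=
    ((hsq.pow 2).sub he).eventually_const_le (by simpa using half_lt_self (pow_pos hs 2))
  obtain ⟨N, hN⟩ := eventually_atTop.1 ((eventually_ge_atTop 1).and (hsignal.and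
    ((eventually_div_add_mul_add_le he hc1 hc2 hc2pos hrel
      (by positivity : 0 < τ * (sHat lam q ^ 2 / 2))).and
    (eventually_div_mul_one_add_lt hc2pos hrel hτ1))))
  refine ⟨N, fun n hn => ?_⟩
  obtain ⟨hn1, hsig, hcut, hsep⟩ := hN n hn
  have hnoise : ∀ j, q < j → j ≤ p n → sHat (lamhat n) j ^ 2 ≤ e n := fun j hqj hjp =>
    sHat_sq_le_of_le_mul_sqrt _ (by positivity) (hnn n j (by omega) hjp)
      (by simpa [hzero j hqj] using (le_abs_self _).trans (hrate n hn1 j (by omega) hjp))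
  obtain ⟨hrq, hrj⟩ := rRatio_le_and_lt (lamhat n) (hp n) (hc1pos n) (hc2pos n) hτ0.le
    (by positivity) hnoise hsig hcut hsep
  have hG := isGreatest_of_le_of_lt hq (by have := hp n; omega) hrq hrj
  exact ⟨hrq, hrj, hG.nonempty, hG.csSup_eq⟩

/-- TDRR with a divergent number of covariates `p n ≤ C₀·n^α`, `0 ≤ α < 1`: if the
estimated eigenvalues converge at rate `(p n / n)^{1/2}` and the ridges satisfy
`c₁(n) → 0`, `c₂(n) → 0`, `n·c₁(n)·c₂(n)/p n → ∞`, then eventually `r_q(n) ≤ τ` and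
`r_j(n) > τ` for `q < j ≤ p n − 2`; consequently the set
`{j ∈ {1, ..., p n − 2} : r_j(n) ≤ τ}` is nonempty with maximum `q`. -/
theorem tdrr_identifies_q_divergent_p (q : ℕ) (hq : 1 ≤ q)
    (lam : ℕ → ℝ)
    (hdec : ∀ i j, 1 ≤ i → i ≤ j → j ≤ q → lam j ≤ lam i)
    (hpos : 0 < lam q)
    (hzero : ∀ j, q < j → lam j = 0)
    (p : ℕ → ℕ) (hp : ∀ n, q + 2 ≤ p n)
    (C₀ α : ℝ) (hα0 : 0 ≤ α) (hα1 : α < 1)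
    (hpgrowth : ∀ n, 1 ≤ n → (p n : ℝ) ≤ C₀ * (n : ℝ) ^ α)
    (lamhat : ℕ → ℕ → ℝ)
    (hnn : ∀ n j, 1 ≤ j → j ≤ p n → 0 ≤ lamhat n j)
    (K : ℝ)
    (hrate : ∀ n, 1 ≤ n → ∀ j, 1 ≤ j → j ≤ p n →
      |lamhat n j - lam j| ≤ K * Real.sqrt ((p n : ℝ) / n))
    (c1 c2 : ℕ → ℝ) (hc1pos : ∀ n, 0 < c1 n) (hc2pos : ∀ n, 0 < c2 n)
    (hc1 : Tendsto c1 atTop (nhds 0)) (hc2 : Tendsto c2 atTop (nhds 0))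
    (hncc : Tendsto (fun n : ℕ => (n : ℝ) * c1 n * c2 n / (p n : ℝ)) atTop atTop)
    (τ : ℝ) (hτ0 : 0 < τ) (hτ1 : τ < 1) :
    ∃ N, ∀ n, N ≤ n →
      rRatio (lamhat n) (c1 n) (c2 n) q ≤ τ ∧
      (∀ j, q < j → j ≤ p n - 2 → τ < rRatio (lamhat n) (c1 n) (c2 n) j) ∧
      {j | 1 ≤ j ∧ j ≤ p n - 2 ∧ rRatio (lamhat n) (c1 n) (c2 n) j ≤ τ}.Nonempty ∧
      sSup {j | 1 ≤ j ∧ j ≤ p n - 2 ∧ rRatio (lamhat n) (c1 n) (c2 n) j ≤ τ} = q :=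
  tdrr_identifies_q_divergent_p_general q hq lam hpos hzero p hp C₀ α hα1 hpgrowth lamhat hnn K
    hrate c1 c2 hc1pos hc2pos hc1 hc2 hncc τ hτ0 hτ1
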